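/- For α > 0, a ∈ 𝔻, and nonnegative integer n, define l_a(z) = (α+n)(α+n+2)·(1-|a|²)²/(1-ā z)^α − α(2α+2n+3)·(1-|a|²)³/(1-ā z)^{α+1} + α(α+1)·(1-|a|²)⁴/(1-ā z)^{α+2}. Then l_a^{(n)}(a) = 0 and l_a^{(n+2)}(a) = 0, while l_a^{(n+1)}(a) = −α(α+1)⋯(α+n) · ā^{n+1}/(1-|a|²)^{α+n-1}. -/

import Mathlib

open Metric

noncomputable def lTest (α : ℝ) (n : ℕ) (a z : ℂ) : ℂ :=
  (((α + n) * (α + n + 2) : ℝ) : ℂ) * (((1 - ‖a‖ ^ 2) ^ 2 : ℝ) : ℂ) *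
      (1 - (starRingEnd ℂ) a * z) ^ (-(α : ℂ))
    - ((α * (2 * α + 2 * n + 3) : ℝ) : ℂ) * (((1 - ‖a‖ ^ 2) ^ 3 : ℝ) : ℂ) *
      (1 - (starRingEnd ℂ) a * z) ^ (-((α : ℂ) + 1))
    + ((α * (α + 1) : ℝ) : ℂ) * (((1 - ‖a‖ ^ 2) ^ 4 : ℝ) : ℂ) *
      (1 - (starRingEnd ℂ) a * z) ^ (-((α : ℂ) + 2))

open Complex Finset

lemma key_deriv (α : ℝ) (a : ℂ) (A B C : ℂ) (k : ℕ) :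
    ∀ z : ℂ, 1 - (starRingEnd ℂ) a * z ∈ Complex.slitPlane →
    iteratedDeriv k (fun z => A * (1 - (starRingEnd ℂ) a * z) ^ (-(α : ℂ))
        - B * (1 - (starRingEnd ℂ) a * z) ^ (-((α : ℂ) + 1))
        + C * (1 - (starRingEnd ℂ) a * z) ^ (-((α : ℂ) + 2))) z
      = ((starRingEnd ℂ) a) ^ k *
        (A * (∏ j ∈ range k, ((α : ℂ) + j)) * (1 - (starRingEnd ℂ) a * z) ^ (-(α : ℂ) - k)
        - B * (∏ j ∈ range k, ((α : ℂ) + 1 + j)) * (1 - (starRingEnd ℂ) a * z) ^ (-((α : ℂ) + 1) - k)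
        + C * (∏ j ∈ range k, ((α : ℂ) + 2 + j)) * (1 - (starRingEnd ℂ) a * z) ^ (-((α : ℂ) + 2) - k)) := by
  induction k with
  | zero =>
    intro z hz
    simp [iteratedDeriv_zero]
  | succ k ih =>
    intro z hz
    have hU : IsOpen {z : ℂ | 1 - (starRingEnd ℂ) a * z ∈ Complex.slitPlane} :=
      Complex.isOpen_slitPlane.preimage (by continuity)
    rw [iteratedDeriv_succ]
    have hev : (fun w => ((starRingEnd ℂ) a) ^ k *
        (A * (∏ j ∈ range k, ((α : ℂ) + j)) * (1 - (starRingEnd ℂ) a * w) ^ (-(α : ℂ) - k)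
        - B * (∏ j ∈ range k, ((α : ℂ) + 1 + j)) * (1 - (starRingEnd ℂ) a * w) ^ (-((α : ℂ) + 1) - k)
        + C * (∏ j ∈ range k, ((α : ℂ) + 2 + j)) * (1 - (starRingEnd ℂ) a * w) ^ (-((α : ℂ) + 2) - k)))
        =ᶠ[nhds z] iteratedDeriv k (fun z => A * (1 - (starRingEnd ℂ) a * z) ^ (-(α : ℂ))
        - B * (1 - (starRingEnd ℂ) a * z) ^ (-((α : ℂ) + 1))
        + C * (1 - (starRingEnd ℂ) a * z) ^ (-((α : ℂ) + 2))) := by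
      filter_upwards [hU.mem_nhds hz] with w hw using (ih w hw).symm
    rw [← Filter.EventuallyEq.deriv_eq hev]
    have h0 : HasDerivAt (fun w : ℂ => 1 - (starRingEnd ℂ) a * w) (-((starRingEnd ℂ) a)) z := by
      simpa using ((hasDerivAt_id z).const_mul ((starRingEnd ℂ) a)).const_sub 1
    have h1 := (h0.cpow_const (c := -(α:ℂ) - k) hz).const_mul (A * (∏ j ∈ range k, ((α : ℂ) + j)))
    have h2 := (h0.cpow_const (c := -((α:ℂ)+1) - k) hz).const_mul (B * (∏ j ∈ range k, ((α : ℂ) + 1 + j)))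
    have h3 := (h0.cpow_const (c := -((α:ℂ)+2) - k) hz).const_mul (C * (∏ j ∈ range k, ((α : ℂ) + 2 + j)))
    have hd := (((h1.sub h2).add h3).const_mul (((starRingEnd ℂ) a) ^ k))
    simp only [Pi.sub_apply, Pi.add_apply] at hd; rw [hd.deriv]
    have e1 : (-(α : ℂ) - k) - 1 = -(α : ℂ) - ((k + 1 : ℕ) : ℂ) := by push_cast; ring
    have e2 : (-((α : ℂ) + 1) - k) - 1 = -((α : ℂ) + 1) - ((k + 1 : ℕ) : ℂ) := by push_cast; ring
    have e3 : (-((α : ℂ) + 2) - k) - 1 = -((α : ℂ) + 2) - ((k + 1 : ℕ) : ℂ) := by push_cast; ring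
    rw [e1, e2, e3, prod_range_succ, prod_range_succ, prod_range_succ]
    push_cast
    ring

lemma coeff_identity (α : ℝ) (hα : 0 < α) (n k : ℕ) :
    (((α + n) * (α + n + 2) : ℝ) : ℂ) * (∏ j ∈ range k, ((α : ℂ) + j))
      - ((α * (2 * α + 2 * n + 3) : ℝ) : ℂ) * (∏ j ∈ range k, ((α : ℂ) + 1 + j))
      + ((α * (α + 1) : ℝ) : ℂ) * (∏ j ∈ range k, ((α : ℂ) + 2 + j))
    = (∏ j ∈ range k, ((α : ℂ) + j)) * ((k : ℂ) - n) * ((k : ℂ) - n - 2) := by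
  have A1 : (α : ℂ) * (∏ j ∈ range k, ((α : ℂ) + 1 + j))
      = (∏ j ∈ range k, ((α : ℂ) + j)) * ((α : ℂ) + k) := by
    have h := Finset.prod_range_succ' (fun j : ℕ => (α : ℂ) + j) k
    have h' := Finset.prod_range_succ (fun j : ℕ => (α : ℂ) + j) k
    have e : (∏ j ∈ range k, ((α : ℂ) + ((j + 1 : ℕ) : ℂ)))
        = ∏ j ∈ range k, ((α : ℂ) + 1 + j) :=
      Finset.prod_congr rfl (fun j _ => by push_cast; ring)
    rw [h', e] at h
    push_cast at h ⊢
    linear_combination -h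
  have A2 : ((α : ℂ) + 1) * (∏ j ∈ range k, ((α : ℂ) + 2 + j))
      = (∏ j ∈ range k, ((α : ℂ) + 1 + j)) * ((α : ℂ) + 1 + k) := by
    have h := Finset.prod_range_succ' (fun j : ℕ => (α : ℂ) + 1 + j) k
    have h' := Finset.prod_range_succ (fun j : ℕ => (α : ℂ) + 1 + j) k
    have e : (∏ j ∈ range k, ((α : ℂ) + 1 + ((j + 1 : ℕ) : ℂ)))
        = ∏ j ∈ range k, ((α : ℂ) + 2 + j) :=
      Finset.prod_congr rfl (fun j _ => by push_cast; ring)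
    rw [h', e] at h
    push_cast at h ⊢
    linear_combination -h
  push_cast
  linear_combination ((k : ℂ) - α - 2 * n - 2) * A1 + (α : ℂ) * A2

theorem lTest_derivs (α : ℝ) (hα : 0 < α) (n : ℕ) (a : ℂ) (ha : a ∈ ball (0:ℂ) 1) :
    iteratedDeriv n (lTest α n a) a = 0 ∧ iteratedDeriv (n + 2) (lTest α n a) a = 0 ∧
      iteratedDeriv (n + 1) (lTest α n a) a =
        -(∏ j ∈ Finset.range (n + 1), ((α : ℂ) + j)) * ((starRingEnd ℂ) a) ^ (n + 1) /
          (((1 - ‖a‖ ^ 2) ^ (α + n - 1) : ℝ) : ℂ) := by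
  have hab : ‖a‖ < 1 := by
    simpa [Complex.dist_eq] using mem_ball.mp ha
  have hr : (0 : ℝ) < 1 - ‖a‖ ^ 2 := by
    have h2 : ‖a‖ ^ 2 < 1 := pow_lt_one₀ (norm_nonneg a) hab two_ne_zero
    linarith
  have haa : 1 - (starRingEnd ℂ) a * a = ((1 - ‖a‖ ^ 2 : ℝ) : ℂ) := by
    rw [mul_comm, Complex.mul_conj']
    push_cast
    ring
  have hmem : 1 - (starRingEnd ℂ) a * a ∈ Complex.slitPlane := by
    rw [haa]; exact Complex.ofReal_mem_slitPlane.mpr hr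
  have main : ∀ k : ℕ, iteratedDeriv k (lTest α n a) a
      = ((starRingEnd ℂ) a) ^ k * (((1 - ‖a‖ ^ 2) ^ (2 - α - k) : ℝ) : ℂ) *
        ((∏ j ∈ range k, ((α : ℂ) + j)) * ((k : ℂ) - n) * ((k : ℂ) - n - 2)) := by
    intro k
    have hfun : lTest α n a = fun z =>
        ((((α + n) * (α + n + 2) : ℝ) : ℂ) * (((1 - ‖a‖ ^ 2) ^ 2 : ℝ) : ℂ)) *
          (1 - (starRingEnd ℂ) a * z) ^ (-(α : ℂ))
        - (((α * (2 * α + 2 * n + 3) : ℝ) : ℂ) * (((1 - ‖a‖ ^ 2) ^ 3 : ℝ) : ℂ)) *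
          (1 - (starRingEnd ℂ) a * z) ^ (-((α : ℂ) + 1))
        + (((α * (α + 1) : ℝ) : ℂ) * (((1 - ‖a‖ ^ 2) ^ 4 : ℝ) : ℂ)) *
          (1 - (starRingEnd ℂ) a * z) ^ (-((α : ℂ) + 2)) := rfl
    rw [hfun, key_deriv α a _ _ _ k a hmem, haa]
    set r : ℝ := 1 - ‖a‖ ^ 2 with hrdef
    have e1 : ((r : ℂ)) ^ (-(α : ℂ) - k) = ((r ^ (-α - k : ℝ) : ℝ) : ℂ) := by
      rw [Complex.ofReal_cpow hr.le]; congr 1; push_cast; ring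
    have e2 : ((r : ℂ)) ^ (-((α : ℂ) + 1) - k) = ((r ^ (-α - 1 - k : ℝ) : ℝ) : ℂ) := by
      rw [Complex.ofReal_cpow hr.le]; congr 1; push_cast; ring
    have e3 : ((r : ℂ)) ^ (-((α : ℂ) + 2) - k) = ((r ^ (-α - 2 - k : ℝ) : ℝ) : ℂ) := by
      rw [Complex.ofReal_cpow hr.le]; congr 1; push_cast; ring
    rw [e1, e2, e3]
    have m1 : ((r ^ 2 : ℝ) : ℂ) * ((r ^ (-α - k : ℝ) : ℝ) : ℂ) = ((r ^ (2 - α - k : ℝ) : ℝ) : ℂ) := by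
      rw [← Complex.ofReal_mul]
      norm_cast
      rw [← Real.rpow_natCast r 2, ← Real.rpow_add hr]
      norm_num
      ring_nf
    have m2 : ((r ^ 3 : ℝ) : ℂ) * ((r ^ (-α - 1 - k : ℝ) : ℝ) : ℂ) = ((r ^ (2 - α - k : ℝ) : ℝ) : ℂ) := by
      rw [← Complex.ofReal_mul]
      norm_cast
      rw [← Real.rpow_natCast r 3, ← Real.rpow_add hr]
      norm_num
      ring_nf
    have m3 : ((r ^ 4 : ℝ) : ℂ) * ((r ^ (-α - 2 - k : ℝ) : ℝ) : ℂ) = ((r ^ (2 - α - k : ℝ) : ℝ) : ℂ) := by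
      rw [← Complex.ofReal_mul]
      norm_cast
      rw [← Real.rpow_natCast r 4, ← Real.rpow_add hr]
      norm_num
      ring_nf
    have hc := coeff_identity α hα n k
    linear_combination
      (((starRingEnd ℂ) a) ^ k * (((α + n) * (α + n + 2) : ℝ) : ℂ) * (∏ j ∈ range k, ((α : ℂ) + j))) * m1
      - (((starRingEnd ℂ) a) ^ k * ((α * (2 * α + 2 * n + 3) : ℝ) : ℂ) * (∏ j ∈ range k, ((α : ℂ) + 1 + j))) * m2
      + (((starRingEnd ℂ) a) ^ k * ((α * (α + 1) : ℝ) : ℂ) * (∏ j ∈ range k, ((α : ℂ) + 2 + j))) * m3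
      + (((starRingEnd ℂ) a) ^ k * ((r ^ (2 - α - k : ℝ) : ℝ) : ℂ)) * hc
  refine ⟨?_, ?_, ?_⟩
  · rw [main n]; simp
  · rw [main (n + 2)]
    have : (((n + 2 : ℕ) : ℂ)) - n - 2 = 0 := by push_cast; ring
    rw [this]; ring
  · rw [main (n + 1)]
    have hexp : (2 - α - ((n + 1 : ℕ) : ℝ)) = -(α + n - 1) := by push_cast; ring
    rw [hexp, Real.rpow_neg hr.le, Complex.ofReal_inv, div_eq_mul_inv]
    push_cast
    ring
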